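/- For every λ-theory L satisfying β-equality, the object U := λx₁.x₁ of the category of retracts R is such that every object A of R is a retract of U: the element A itself defines both a morphism r_A : U → A and a morphism s_A : A → U with r_A ∘ s_A = id_A. In particular U^U is a retract of U, so U is a reflexive object of R. -/
import Mathlib


/-- An (untyped) λ-theory satisfying β-equality (Def. 2.1/2.4 of the paper):
an algebraic theory `T` with abstraction `abs` (written `λₙ` in the paper) and
application-transpose `rho` (written `ρₙ`), compatible with substitution, and
satisfying β-equality `ρₙ ∘ λₙ = id`. -/
structure LamTh where
  T : ℕ → Type
  xv : ∀ n, Fin n → T n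
  subst : ∀ {m n}, T m → (Fin m → T n) → T n
  subst_xv : ∀ {m n} (j : Fin m) (g : Fin m → T n), subst (xv m j) g = g j
  subst_id : ∀ {m} (f : T m), subst f (xv m) = f
  subst_assoc : ∀ {l m n} (f : T l) (g : Fin l → T m) (h : Fin m → T n),
      subst (subst f g) h = subst f fun i => subst (g i) h
  abs : ∀ {n}, T (n + 1) → T n
  rho : ∀ {n}, T n → T (n + 1)
  abs_subst : ∀ {m n} (f : T (m + 1)) (h : Fin m → T n),
      subst (abs f) h =
        abs (subst f (Fin.snoc (fun i => subst (h i) fun j => xv (n + 1) j.castSucc)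
          (xv (n + 1) (Fin.last n))))
  rho_subst : ∀ {m n} (g : T m) (h : Fin m → T n),
      rho (subst g h) =
        subst (rho g) (Fin.snoc (fun i => subst (h i) fun j => xv (n + 1) j.castSucc)
          (xv (n + 1) (Fin.last n)))
  beta : ∀ {n} (f : T (n + 1)), rho (abs f) = f

namespace LamTh

variable (L : LamTh)

/-- Weakening `ι_{n,1} : T n → T (n+1)`. -/
def wk {n : ℕ} (f : L.T n) : L.T (n + 1) :=
  L.subst f fun j => L.xv (n + 1) j.castSucc

/-- Weakening of a constant `ι_{0,n} : T 0 → T n`. -/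
def wk0 {n : ℕ} (a : L.T 0) : L.T n :=
  L.subst a Fin.elim0

/-- Application `f g := ρ(x_{1,1}) • (f, g)` (Def. 2.12/Rem. 2.13). -/
def appT {n : ℕ} (f g : L.T n) : L.T n :=
  L.subst (L.rho (L.xv 1 0)) ![f, g]

/-- Composition of terms, `a ∘ b := λ x. a (b x)`. -/
def compT {n : ℕ} (f g : L.T n) : L.T n :=
  L.abs (L.appT (L.wk f) (L.appT (L.wk g) (L.xv (n + 1) (Fin.last n))))

/-- `a ∘ b` for constants. -/
def comp (a b : L.T 0) : L.T 0 := L.compT a b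

/-- Pairing `(s, t) := λ x. x s t`. -/
def pairT {n : ℕ} (s t : L.T n) : L.T n :=
  L.abs (L.appT (L.appT (L.xv (n + 1) (Fin.last n)) (L.wk s)) (L.wk t))

/-- Pairing of morphisms, `⟨f, g⟩ := λ x. (f x, g x)`. -/
def pairMor (f g : L.T 0) : L.T 0 :=
  L.abs (L.pairT (L.appT (L.wk f) (L.xv 1 0)) (L.appT (L.wk g) (L.xv 1 0)))

/-- First projection `π₁ = λ x₁. x₁ (λ x₂ x₃. x₂)`. -/
def pi1 : L.T 0 := L.abs (L.appT (L.xv 1 0) (L.abs (L.abs (L.xv 3 1))))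

/-- Second projection `π₂ = λ x₁. x₁ (λ x₂ x₃. x₃)`. -/
def pi2 : L.T 0 := L.abs (L.appT (L.xv 1 0) (L.abs (L.abs (L.xv 3 2))))

/-- The reflexive object `U = λ x₁. x₁` of the category of retracts. -/
def UU : L.T 0 := L.abs (L.xv 1 0)

/-- The terminal object `I = λ x₁ x₂. x₂`. -/
def Iterm : L.T 0 := L.abs (L.abs (L.xv 2 1))

/-- `f` is a morphism `A → B` in the category of retracts `R`:
`B ∘ f = f = f ∘ A`. -/
def IsRMor (A B f : L.T 0) : Prop := L.comp B f = f ∧ L.comp f A = f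

/-- `A` is an object of the category of retracts `R`: `A ∘ A = A`. -/
def IsRObj (A : L.T 0) : Prop := L.comp A A = A

/-- `π_{n,i} = π₂ ∘ π₁^{n-i}` (with `i` 0-indexed here, so `π₂ ∘ π₁^{n-1-i}`). -/
def piProj (n : ℕ) (i : Fin n) : L.T 0 :=
  (fun t => L.comp t L.pi1)^[n - 1 - (i : ℕ)] L.pi2

/-- `⟨a₁, …, aₙ⟩ = ⟨⟨…⟨⟨λx.x, a₁⟩, a₂⟩…⟩, aₙ⟩`, the tupling of morphisms. -/
def tupleMor : ∀ {n : ℕ}, (Fin n → L.T 0) → L.T 0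
  | 0, _ => L.UU
  | n + 1, g => L.pairMor (tupleMor fun i => g i.castSucc) (g (Fin.last n))

/-- The `n`-fold product `Uⁿ = ⟨π_{n,i}⟩ᵢ` of `U` in `R`. -/
def Upow (n : ℕ) : L.T 0 := L.tupleMor fun i : Fin n => L.piProj n i

/-- The binary product object `A₁ × A₂ = ⟨A₁ ∘ π₁, A₂ ∘ π₂⟩` in `R`. -/
def prodObj (A₁ A₂ : L.T 0) : L.T 0 :=
  L.pairMor (L.comp A₁ L.pi1) (L.comp A₂ L.pi2)

/-- The exponential object `C^B = λ x₁. C ∘ x₁ ∘ B` in `R`. -/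
def expObj (B C : L.T 0) : L.T 0 :=
  L.abs (L.compT (L.compT (L.wk0 C) (L.xv 1 0)) (L.wk0 B))

end LamTh

namespace LamTh

variable (L : LamTh)

lemma xv1_eq : L.xv 1 0 = L.xv 1 (Fin.last 0) := by
  congr 1

lemma subst_appT {m n : ℕ} (f g : L.T m) (h : Fin m → L.T n) :
    L.subst (L.appT f g) h = L.appT (L.subst f h) (L.subst g h) := by
  unfold appT
  rw [L.subst_assoc]
  congr 1
  funext i
  fin_cases i <;> simp

lemma subst_wk {m n : ℕ} (f : L.T m) (g : Fin m → L.T n) (t : L.T n) :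
    L.subst (L.wk f) (Fin.snoc g t) = L.subst f g := by
  unfold wk
  rw [L.subst_assoc]
  congr 1
  funext j
  rw [L.subst_xv, Fin.snoc_castSucc]

lemma rho_eq {n : ℕ} (f : L.T n) :
    L.rho f = L.appT (L.wk f) (L.xv (n + 1) (Fin.last n)) := by
  have hf : L.subst (L.xv 1 0) (fun _ => f) = f := L.subst_xv 0 _
  conv_lhs => rw [← hf]
  rw [L.rho_subst]
  unfold appT
  congr 1
  funext i
  fin_cases i <;> simp [wk, Fin.snoc]

lemma app_subst_abs {m n : ℕ} (s : L.T (m + 1)) (h : Fin m → L.T n) (t : L.T n) :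
    L.appT (L.subst (L.abs s) h) t = L.subst s (Fin.snoc h t) := by
  have key : L.rho (L.subst (L.abs s) h)
      = L.appT (L.wk (L.subst (L.abs s) h)) (L.xv (n + 1) (Fin.last n)) := L.rho_eq _
  rw [L.abs_subst, L.beta] at key
  have := congrArg (fun u => L.subst u (Fin.snoc (L.xv n) t)) key
  rw [L.subst_assoc, L.subst_appT, L.subst_wk, L.subst_xv, Fin.snoc_last,
    L.subst_id] at this
  rw [L.abs_subst, ← this]
  congr 1
  funext i
  refine Fin.lastCases ?_ (fun j => ?_) i
  · simp [Fin.snoc_last, L.subst_xv]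
  · rw [Fin.snoc_castSucc, Fin.snoc_castSucc]
    show L.subst (L.subst (h j) _) _ = _
    rw [L.subst_assoc]
    conv_rhs => rw [← L.subst_id (h j)]
    congr 1
    funext k
    rw [L.subst_xv, Fin.snoc_castSucc]

lemma app_abs {n : ℕ} (s : L.T (n + 1)) (t : L.T n) :
    L.appT (L.abs s) t = L.subst s (Fin.snoc (L.xv n) t) := by
  conv_lhs => rw [← L.subst_id (L.abs s)]
  rw [L.app_subst_abs]

lemma app_idabs {n : ℕ} (t : L.T n) :
    L.appT (L.abs (L.xv (n + 1) (Fin.last n))) t = t := by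
  rw [L.app_abs, L.subst_xv, Fin.snoc_last]

lemma wk_abs_last (n : ℕ) :
    L.wk (L.abs (L.xv (n + 1) (Fin.last n)))
      = L.abs (L.xv (n + 2) (Fin.last (n + 1))) := by
  unfold wk
  rw [L.abs_subst, L.subst_xv, Fin.snoc_last]

lemma UU_eq : L.UU = L.abs (L.xv 1 (Fin.last 0)) := by
  rw [UU, L.xv1_eq]

lemma appT_wkUU (t : L.T 1) : L.appT (L.wk L.UU) t = t := by
  rw [L.UU_eq, L.wk_abs_last, L.app_idabs]

lemma comp_U_left (f : L.T 0) : L.comp L.UU f = L.abs (L.rho f) := by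
  show L.abs (L.appT (L.wk L.UU) (L.appT (L.wk f) (L.xv 1 (Fin.last 0)))) = _
  rw [L.appT_wkUU, ← L.rho_eq]

lemma comp_U_right (f : L.T 0) : L.comp f L.UU = L.abs (L.rho f) := by
  show L.abs (L.appT (L.wk f) (L.appT (L.wk L.UU) (L.xv 1 (Fin.last 0)))) = _
  rw [L.appT_wkUU, ← L.rho_eq]

lemma UU_obj : L.IsRObj L.UU := by
  show L.comp L.UU L.UU = L.UU
  rw [L.comp_U_right, L.UU_eq, L.beta]

lemma comp_U_right_abs (s : L.T 1) : L.comp (L.abs s) L.UU = L.abs s := by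
  rw [L.comp_U_right, L.beta]

lemma comp_U_left_abs (s : L.T 1) : L.comp L.UU (L.abs s) = L.abs s := by
  rw [L.comp_U_left, L.beta]

lemma wk0_UU : L.wk0 L.UU = L.abs (L.xv 2 (Fin.last 1)) := by
  rw [UU_eq, wk0, L.abs_subst, L.subst_xv, Fin.snoc_last]

lemma wk_wk0_UU : L.wk (L.wk0 L.UU) = L.abs (L.xv 3 (Fin.last 2)) := by
  rw [L.wk0_UU, L.wk_abs_last]

lemma compT_wk0UU_left (t : L.T 1) :
    L.compT (L.wk0 L.UU) t = L.abs (L.rho t) := by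
  show L.abs (L.appT (L.wk (L.wk0 L.UU)) (L.appT (L.wk t) (L.xv 2 (Fin.last 1)))) = _
  rw [L.wk_wk0_UU, L.app_idabs, ← L.rho_eq]

lemma compT_wk0UU_right (t : L.T 1) :
    L.compT t (L.wk0 L.UU) = L.abs (L.rho t) := by
  show L.abs (L.appT (L.wk t) (L.appT (L.wk (L.wk0 L.UU)) (L.xv 2 (Fin.last 1)))) = _
  rw [L.wk_wk0_UU, L.app_idabs, ← L.rho_eq]

lemma expUU_eq : L.expObj L.UU L.UU = L.abs (L.abs (L.rho (L.xv 1 0))) := by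
  rw [expObj, L.compT_wk0UU_left, L.compT_wk0UU_right, L.beta]

lemma subst_s0 (g : Fin 1 → L.T 1) :
    L.subst (L.abs (L.rho (L.xv 1 0))) g = L.abs (L.rho (g 0)) := by
  rw [L.abs_subst]
  congr 1
  rw [← L.rho_subst (L.xv 1 0) g, L.subst_xv]

lemma app_wk_E (t : L.T 1) :
    L.appT (L.wk (L.expObj L.UU L.UU)) t = L.abs (L.rho t) := by
  rw [L.expUU_eq]
  show L.appT (L.subst (L.abs (L.abs (L.rho (L.xv 1 0)))) _) t = _
  rw [L.app_subst_abs]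
  rw [show (Fin.snoc (fun j : Fin 0 => L.xv 1 j.castSucc) t : Fin 1 → L.T 1)
      = fun _ => t from funext fun i => by
        rw [show i = Fin.last 0 from Fin.ext (by omega), Fin.snoc_last]]
  rw [L.subst_s0]

lemma expUU_obj : L.IsRObj (L.expObj L.UU L.UU) := by
  show L.comp (L.expObj L.UU L.UU) (L.expObj L.UU L.UU) = L.expObj L.UU L.UU
  show L.abs (L.appT (L.wk (L.expObj L.UU L.UU))
      (L.appT (L.wk (L.expObj L.UU L.UU)) (L.xv 1 (Fin.last 0)))) = _
  rw [L.app_wk_E, L.app_wk_E, L.beta, L.expUU_eq, ← L.xv1_eq]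

end LamTh

/-- For every λ-theory `L` satisfying β-equality, the object
`U := λ x₁. x₁` of the category of retracts `R` is such that every object `A`
of `R` is a retract of `U`: the element `A` itself defines both a morphism
`r_A : U → A` and a morphism `s_A : A → U` with `r_A ∘ s_A = id_A` (recall
that `id_A = A` in `R`).  In particular `U^U` is a retract of `U`, so `U` is a
reflexive object of `R`. -/
theorem U_is_reflexive (L : LamTh) :
    -- `U` is an object of `R`
    L.IsRObj L.UU ∧
    -- every object `A` of `R` is a retract of `U`, via `r_A = s_A = A`
    (∀ A : L.T 0, L.IsRObj A →
      L.IsRMor L.UU A A ∧ L.IsRMor A L.UU A ∧ L.comp A A = A) ∧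
    -- in particular `U^U ◁ U`: with `app = abs = U^U` we get a retraction
    -- `app : U → U^U`, `abs : U^U → U`, `app ∘ abs = id_{U^U}`; hence `U` is
    -- a reflexive object
    (L.IsRObj (L.expObj L.UU L.UU) ∧
      L.IsRMor L.UU (L.expObj L.UU L.UU) (L.expObj L.UU L.UU) ∧
      L.IsRMor (L.expObj L.UU L.UU) L.UU (L.expObj L.UU L.UU) ∧
      L.comp (L.expObj L.UU L.UU) (L.expObj L.UU L.UU) = L.expObj L.UU L.UU) := by
  have retr : ∀ A : L.T 0, L.IsRObj A →
      L.IsRMor L.UU A A ∧ L.IsRMor A L.UU A ∧ L.comp A A = A := by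
    intro A hA
    have hA' : L.comp A A = A := hA
    have hform : A = L.abs (L.appT (L.wk A)
        (L.appT (L.wk A) (L.xv 1 (Fin.last 0)))) := hA'.symm
    have hAabs : L.comp A L.UU = A := by
      conv_lhs => rw [hform]
      rw [L.comp_U_right_abs, ← hform]
    have hAabs' : L.comp L.UU A = A := by
      conv_lhs => rw [hform]
      rw [L.comp_U_left_abs, ← hform]
    exact ⟨⟨hA', hAabs⟩, ⟨hAabs', hA'⟩, hA'⟩
  refine ⟨L.UU_obj, retr, L.expUU_obj, ?_, ?_, (retr _ L.expUU_obj).2.2⟩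
  · exact (retr _ L.expUU_obj).1
  · exact (retr _ L.expUU_obj).2.1
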